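/- arXiv:1907.10807 — 2 statements merged into one kernel-verified Lean document; each statement's English description precedes it below -/
import Mathlib

section
/- Let z : ℕ → ℂ satisfy the Newton–Raphson recursion z(n+1) = (z(n)² − 1)/(2·z(n)) for all n, with initial condition satisfying Im(z(0)) > 0. Then the sequence z(n) converges to i as n → ∞. -/
/-!
The Cayley transform `w = (z - i) / (z + i)` conjugates the Newton map of `z² + 1` to `w ↦ w²`,
because `N z ∓ i = (z ∓ i)² / (2z)`. It sends the upper half-plane, which `N` preserves, into the
unit disc, so `w (z n) = w (z 0) ^ 2 ^ n → 0`, and inverting the Cayley transform gives `z n → i`.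
-/

open Complex Filter Topology

theorem pow_two_pow_of_succ_eq_sq {M : Type*} [Monoid M] {w : ℕ → M}
    (hw : ∀ n, w (n + 1) = w n ^ 2) (n : ℕ) : w n = w 0 ^ 2 ^ n := by
  induction n with
  | zero => simp
  | succ k ih => rw [hw k, ih, ← pow_mul, pow_succ]

theorem tendsto_pow_two_pow_nhds_zero {R : Type*} [SeminormedRing R] {x : R} (hx : ‖x‖ < 1) :
    Tendsto (fun n : ℕ => x ^ 2 ^ n) atTop (𝓝 0) :=
  (tendsto_pow_atTop_nhds_zero_of_norm_lt_one hx).comp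
    (tendsto_pow_atTop_atTop_of_one_lt one_lt_two)

namespace NewtonSqAddOne

variable {z : ℂ}

noncomputable def newtonMap (z : ℂ) : ℂ := (z ^ 2 - 1) / (2 * z)

noncomputable def cayley (z : ℂ) : ℂ := (z - I) / (z + I)

theorem newtonMap_eq (hz : z ≠ 0) : newtonMap z = (z - z⁻¹) / 2 := by
  unfold newtonMap
  field_simp

theorem im_newtonMap_pos (hz : 0 < z.im) : 0 < (newtonMap z).im := by
  have hz0 : z ≠ 0 := fun h => by simp [h] at hz
  have hnormSq : 0 < normSq z := normSq_pos.mpr hz0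
  rw [newtonMap_eq hz0, div_ofNat_im, sub_im, inv_im, neg_div, sub_neg_eq_add]
  positivity

theorem add_I_ne_zero_of_im_pos (hz : 0 < z.im) : z + I ≠ 0 := fun h => by
  have := congrArg im h
  simp only [add_im, I_im, zero_im] at this
  linarith

theorem cayley_newtonMap (hz : z ≠ 0) : cayley (newtonMap z) = cayley z ^ 2 := by
  have hsub : newtonMap z - I = (z - I) ^ 2 / (2 * z) := by
    unfold newtonMap
    field_simp
    linear_combination (-1 : ℂ) * I_sq
  have hadd : newtonMap z + I = (z + I) ^ 2 / (2 * z) := by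
    unfold newtonMap
    field_simp
    linear_combination (-1 : ℂ) * I_sq
  rw [cayley, cayley, hsub, hadd, div_div_div_cancel_right₀ (by simpa using hz), div_pow]

theorem norm_cayley_lt_one (hz : 0 < z.im) : ‖cayley z‖ < 1 := by
  have hsq : ‖z - I‖ ^ 2 < ‖z + I‖ ^ 2 := by
    simp only [Complex.sq_norm, normSq_apply, sub_re, sub_im, add_re, add_im, I_re, I_im]
    nlinarith
  rw [cayley, norm_div, div_lt_one (norm_pos_iff.mpr (add_I_ne_zero_of_im_pos hz))]
  exact lt_of_pow_lt_pow_left₀ 2 (norm_nonneg _) hsq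

theorem cayley_ne_one (z : ℂ) : cayley z ≠ 1 := by
  intro h
  by_cases hz : z + I = 0
  -- at `z = -i` the quotient takes the junk value `0`
  · simp [cayley, hz] at h
  · rw [cayley, div_eq_one_iff_eq hz] at h
    have : (2 : ℂ) * I = 0 := by linear_combination -h
    simp at this

theorem inv_cayley (hz : z + I ≠ 0) : I * (1 + cayley z) / (1 - cayley z) = z := by
  rw [div_eq_iff (sub_ne_zero.mpr (cayley_ne_one z).symm), cayley]
  field_simp
  ring

theorem tendsto_of_tendsto_cayley {ι : Type*} {l : Filter ι} {u : ι → ℂ}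
    (hu : ∀ i, u i + I ≠ 0) (h : Tendsto (fun i => cayley (u i)) l (𝓝 0)) :
    Tendsto u l (𝓝 I) := by
  have hinv : Tendsto (fun i => I * (1 + cayley (u i)) / (1 - cayley (u i))) l
      (𝓝 (I * (1 + 0) / (1 - 0))) :=
    (tendsto_const_nhds.mul (tendsto_const_nhds.add h)).div
      (tendsto_const_nhds.sub h) (by simp)
  simpa only [inv_cayley (hu _), add_zero, sub_zero, mul_one, div_one] using hinv

end NewtonSqAddOne

open NewtonSqAddOne in
/-- The Newton–Raphson iteration for `z² + 1` started in the open upper half-plane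
converges to the root `i`. -/
theorem newton_converges_to_i
    (z : ℕ → ℂ) (hrec : ∀ n : ℕ, z (n + 1) = (z n ^ 2 - 1) / (2 * z n))
    (h0 : 0 < (z 0).im) :
    Filter.Tendsto z Filter.atTop (nhds Complex.I) := by
  have him : ∀ n, 0 < (z n).im := fun n => by
    induction n with
    | zero => exact h0
    | succ k ih => rw [hrec k]; exact im_newtonMap_pos ih
  have hsq : ∀ n, cayley (z (n + 1)) = cayley (z n) ^ 2 := fun n => by
    rw [hrec n, ← newtonMap, cayley_newtonMap fun h => by simpa [h] using him n]
  refine tendsto_of_tendsto_cayley (fun n => add_I_ne_zero_of_im_pos (him n)) ?_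
  simpa only [← pow_two_pow_of_succ_eq_sq (w := fun n => cayley (z n)) hsq] using
    tendsto_pow_two_pow_nhds_zero (norm_cayley_lt_one h0)
end

section
/- Let z₀ ∈ ℝ with z₀ ≠ 0, set c₁ = arctan(−1/z₀), and let z : ℕ → ℝ satisfy z(0) = z₀ and the Newton–Raphson recursion z(n+1) = (z(n)² − 1)/(2·z(n)) for all n. If n ∈ ℕ is such that sin(2^k·c₁) ≠ 0 and cos(2^k·c₁) ≠ 0 for all k < n, then z(n) = −cot(2ⁿ·c₁). -/
/-!
The Newton map `N x = (x² - 1) / (2x)` is odd and conjugates to angle doubling through the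
cotangent: `N (cot θ) = cot (2θ)`. Hence `n ↦ -cot (2ⁿ c₁)` satisfies the recursion, and `c₁` is
chosen so that it starts at `z₀`.
-/

open Real

/-- Thanks to `x / 0 = 0` this holds for every `x`: where `sin x` or `cos x` vanishes, both sides
are `0`. -/
theorem Real.cot_two_mul (x : ℝ) : cot (2 * x) = (cot x ^ 2 - 1) / (2 * cot x) := by
  rw [← tan_inv_eq_cot, tan_two_mul, ← cot_inv_eq_tan, inv_div]
  rcases eq_or_ne (cot x) 0 with h | h
  · simp [h]
  · field_simp

theorem Real.neg_cot_arctan_neg_one_div (x : ℝ) : -cot (arctan (-1 / x)) = x := by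
  rw [← tan_inv_eq_cot, tan_arctan, inv_div, div_neg, div_one, neg_neg]

theorem newton_real_explicit_solution_arctan_general
    (z₀ : ℝ) (z : ℕ → ℝ) (h0 : z 0 = z₀)
    (hrec : ∀ n : ℕ, z (n + 1) = (z n ^ 2 - 1) / (2 * z n))
    (n : ℕ) :
    z n = -Real.cot (2 ^ n * Real.arctan (-1 / z₀)) := by
  induction n with
  | zero => simp [h0, neg_cot_arctan_neg_one_div]
  | succ n ih => rw [hrec, ih, pow_succ' (2 : ℝ), mul_assoc, cot_two_mul]; ring

/-- With `c₁ = arctan (−1/z₀)`, the Newton–Raphson recursion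
`z(n+1) = (z(n)² − 1)/(2 z(n))` started at `z(0) = z₀ ≠ 0` satisfies
`z(n) = −cot (2ⁿ c₁)`, provided `sin (2^k c₁) ≠ 0` and `cos (2^k c₁) ≠ 0`
for all `k < n`. -/
theorem newton_real_explicit_solution_arctan
    (z₀ : ℝ) (hz₀ : z₀ ≠ 0) (z : ℕ → ℝ) (h0 : z 0 = z₀)
    (hrec : ∀ n : ℕ, z (n + 1) = (z n ^ 2 - 1) / (2 * z n))
    (n : ℕ)
    (hdom : ∀ k < n,
      Real.sin (2 ^ k * Real.arctan (-1 / z₀)) ≠ 0 ∧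
      Real.cos (2 ^ k * Real.arctan (-1 / z₀)) ≠ 0) :
    z n = -Real.cot (2 ^ n * Real.arctan (-1 / z₀)) :=
  newton_real_explicit_solution_arctan_general z₀ z h0 hrec n
end
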